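/- Let a, b, c, d > 0 and define G : ℝ²_{>0} → ℝ² by G(x, y) = ((a − bx − xy)/y, (c − dy + xy)/y). Then G is differentiable at every point (x, y) with x > 0, y > 0, and the divergence of G there (the trace of its Fréchet derivative) equals (1/y)·(−b − y − c/y), which is strictly negative. -/

import Mathlib

/-!
Dividing a planar field `F = (P, Q)` by the Dulac function `y` gives
`div (F / y) = (∂ₓP + ∂ᵧQ) / y - Q / y²`. For the NOPO field `∂ₓP + ∂ᵧQ = -b - y - d + x`, and the
terms `x` and `d` cancel against `Q / y² = (c - d y + x y) / y²`, leaving `(-b - y - c / y) / y`,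
which is negative on the open quadrant because `b, c > 0`.
-/

open ContinuousLinearMap

theorem LinearMap.trace_eq_fst_add_snd {R : Type*} [CommRing R] (L : (R × R) →ₗ[R] R × R) :
    LinearMap.trace R (R × R) L = (L (1, 0)).1 + (L (0, 1)).2 := by
  rw [LinearMap.trace_eq_matrix_trace R (Module.Basis.finTwoProd R)]
  simp [Matrix.trace, Fin.sum_univ_two, LinearMap.toMatrix_apply]

theorem HasFDerivAt.div {𝕜 E : Type*} [NontriviallyNormedField 𝕜] [NormedAddCommGroup E]
    [NormedSpace 𝕜 E] {f h : E → 𝕜} {f' h' : E →L[𝕜] 𝕜} {x : E}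
    (hf : HasFDerivAt f f' x) (hh : HasFDerivAt h h' x) (hx : h x ≠ 0) :
    HasFDerivAt (fun y => f y / h y) ((h x)⁻¹ • f' - (f x / h x ^ 2) • h') x := by
  have hinv : HasFDerivAt (fun y => (h y)⁻¹) ((-(h x ^ 2)⁻¹) • h') x :=
    (hasDerivAt_inv hx).comp_hasFDerivAt x hh
  simp only [div_eq_mul_inv]
  refine (hf.mul hinv).congr_fderiv ?_
  ext v
  simp only [sub_apply, add_apply, smul_apply, smul_eq_mul]
  ring

section Dulac

variable {𝕜 : Type*} [NontriviallyNormedField 𝕜] {f g : 𝕜 × 𝕜 → 𝕜} {f' g' : 𝕜 × 𝕜 →L[𝕜] 𝕜}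
  {p : 𝕜 × 𝕜}

theorem hasFDerivAt_div_snd (hf : HasFDerivAt f f' p) (hg : HasFDerivAt g g' p) (hp : p.2 ≠ 0) :
    HasFDerivAt (fun q => (f q / q.2, g q / q.2))
      (((p.2)⁻¹ • f' - (f p / p.2 ^ 2) • snd 𝕜 𝕜 𝕜).prod
        ((p.2)⁻¹ • g' - (g p / p.2 ^ 2) • snd 𝕜 𝕜 𝕜)) p :=
  (hf.div hasFDerivAt_snd hp).prodMk (hg.div hasFDerivAt_snd hp)

theorem trace_fderiv_div_snd (hf : HasFDerivAt f f' p) (hg : HasFDerivAt g g' p) (hp : p.2 ≠ 0) :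
    LinearMap.trace 𝕜 (𝕜 × 𝕜) (fderiv 𝕜 (fun q => (f q / q.2, g q / q.2)) p).toLinearMap
      = (f' (1, 0) + g' (0, 1)) / p.2 - g p / p.2 ^ 2 := by
  rw [(hasFDerivAt_div_snd hf hg hp).fderiv, LinearMap.trace_eq_fst_add_snd]
  simp only [coe_prod, toLinearMap_sub, toLinearMap_smul, coe_snd, LinearMap.prod_apply,
    Function.prod_apply, LinearMap.sub_apply, LinearMap.smul_apply, coe_coe, smul_eq_mul,
    LinearMap.snd_apply, mul_zero, sub_zero, mul_one]
  ring

end Dulac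

theorem stmt_3 (a b c d : ℝ) (hb : 0 < b) (hc : 0 < c)
    (G : ℝ × ℝ → ℝ × ℝ)
    (hG : ∀ p : ℝ × ℝ, G p = ((a - b * p.1 - p.1 * p.2) / p.2,
                              (c - d * p.2 + p.1 * p.2) / p.2)) :
    ∀ p : ℝ × ℝ, 0 < p.1 → 0 < p.2 →
      DifferentiableAt ℝ G p ∧
      LinearMap.trace ℝ (ℝ × ℝ) (fderiv ℝ G p).toLinearMap
        = (1 / p.2) * (-b - p.2 - c / p.2) ∧
      LinearMap.trace ℝ (ℝ × ℝ) (fderiv ℝ G p).toLinearMap < 0 := by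
  intro p _ hy
  have hfst : HasFDerivAt (fun q : ℝ × ℝ => q.1) (fst ℝ ℝ ℝ) p := hasFDerivAt_fst
  have hsnd : HasFDerivAt (fun q : ℝ × ℝ => q.2) (snd ℝ ℝ ℝ) p := hasFDerivAt_snd
  have hP : HasFDerivAt (fun q : ℝ × ℝ => a - b * q.1 - q.1 * q.2) _ p :=
    ((hasFDerivAt_const a p).sub (hfst.const_mul b)).sub (hfst.mul hsnd)
  have hQ : HasFDerivAt (fun q : ℝ × ℝ => c - d * q.2 + q.1 * q.2) _ p :=
    ((hasFDerivAt_const c p).sub (hsnd.const_mul d)).add (hfst.mul hsnd)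
  have hG' : G = _ := funext hG
  have hdiv : LinearMap.trace ℝ (ℝ × ℝ) (fderiv ℝ G p).toLinearMap
      = 1 / p.2 * (-b - p.2 - c / p.2) := by
    rw [hG', trace_fderiv_div_snd hP hQ hy.ne']
    simp only [sub_apply, add_apply, zero_apply, smul_apply, coe_fst', coe_snd', smul_eq_mul]
    field_simp
    ring
  refine ⟨hG' ▸ (hasFDerivAt_div_snd hP hQ hy.ne').differentiableAt, hdiv, ?_⟩
  rw [hdiv]
  exact mul_neg_of_pos_of_neg (by positivity) (by linarith [div_pos hc hy])
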